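/- arXiv:1703.03209 — 3 statements merged into one kernel-verified Lean document; each statement's English description precedes it below -/
import Mathlib

section
/- Let L be a lattice with least element 0 and let a be an element of L that is both an atom of L and a neutral element of L. Then an element x ∈ L is cancellable if and only if the element x ⊔ a is cancellable. -/
/-- Let `L` be a lattice with least element `0` and let `a` be an element of `L` that is
both an atom of `L` and a neutral element of `L`. Then an element `x ∈ L` is cancellable
if and only if the element `x ⊔ a` is cancellable. -/
theorem stmt_0 {L : Type*} [Lattice L] [OrderBot L] (a : L)
    (ha_atom : IsAtom a)
    (ha_neutral : ∀ y z : L, (a ⊔ y) ⊓ (y ⊔ z) ⊓ (z ⊔ a) = (a ⊓ y) ⊔ (y ⊓ z) ⊔ (z ⊓ a))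
    (x : L) :
    (∀ y z : L, x ⊔ y = x ⊔ z → x ⊓ y = x ⊓ z → y = z) ↔
      (∀ y z : L, (x ⊔ a) ⊔ y = (x ⊔ a) ⊔ z → (x ⊔ a) ⊓ y = (x ⊔ a) ⊓ z → y = z) := by
  -- `a ⊓ t` is `⊥` whenever `a ≰ t` (since `a` is an atom)
  have hbot : ∀ t : L, ¬ a ≤ t → a ⊓ t = ⊥ := by
    intro t ht
    rcases ha_atom.le_iff.mp (inf_le_left : a ⊓ t ≤ a) with h | h
    · exact h
    · exact absurd (le_trans h.ge inf_le_right) ht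
  -- `a` is join-prime
  have hprime : ∀ y z : L, a ≤ y ⊔ z → a ≤ y ∨ a ≤ z := by
    intro y z h
    by_contra hc
    push_neg at hc
    have hy := hbot y hc.1
    have hz := hbot z hc.2
    have key := ha_neutral y z
    have hle : a ≤ (a ⊔ y) ⊓ (y ⊔ z) ⊓ (z ⊔ a) :=
      le_inf (le_inf le_sup_left h) le_sup_right
    rw [key, hy, inf_comm z a, hz, bot_sup_eq, sup_bot_eq] at hle
    exact hc.1 (hle.trans inf_le_left)
  -- `a` is cancellable
  have hcancel_a : ∀ u v : L, a ⊔ u = a ⊔ v → a ⊓ u = a ⊓ v → u = v := by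
    intro u v hs hm
    have key : ∀ p q : L, a ⊔ p = a ⊔ q → a ⊓ p = a ⊓ q → p ≤ q := by
      intro p q hs hm
      have h1 := ha_neutral p q
      have hp : p ≤ (a ⊔ p) ⊓ (p ⊔ q) ⊓ (q ⊔ a) := by
        refine le_inf (le_inf le_sup_right le_sup_left) ?_
        rw [sup_comm q a, ← hs]
        exact le_sup_right
      rw [h1] at hp
      calc p ≤ (a ⊓ p) ⊔ (p ⊓ q) ⊔ (q ⊓ a) := hp
        _ ≤ q := by
          refine sup_le (sup_le ?_ inf_le_right) inf_le_left
          rw [hm]; exact inf_le_right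
    exact le_antisymm (key u v hs hm) (key v u hs.symm hm.symm)
  by_cases hax : a ≤ x
  · rw [sup_eq_left.mpr hax]
  have hax0 : a ⊓ x = ⊥ := hbot x hax
  -- distributivity: `(x ⊔ a) ⊓ y = (x ⊓ y) ⊔ (a ⊓ y)`
  have hdist : ∀ y : L, (x ⊔ a) ⊓ y = (x ⊓ y) ⊔ (a ⊓ y) := by
    intro y
    apply le_antisymm
    · have key := ha_neutral x y
      have h1 : (x ⊔ a) ⊓ y ≤ (a ⊔ x) ⊓ (x ⊔ y) ⊓ (y ⊔ a) := by
        refine le_inf (le_inf ?_ ?_) ?_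
        · rw [sup_comm a x]; exact inf_le_left
        · exact inf_le_right.trans le_sup_right
        · exact inf_le_right.trans le_sup_left
      rw [key, hax0, bot_sup_eq, inf_comm y a] at h1
      exact h1
    · exact sup_le (inf_le_inf_right y le_sup_left) (inf_le_inf_right y le_sup_right)
  constructor
  · -- `x` cancellable → `x ⊔ a` cancellable
    intro h y z hs hm
    by_cases hy : a ≤ y <;> by_cases hz : a ≤ z
    · -- a ≤ y, a ≤ z
      have hmy : (x ⊓ y) ⊔ a = (x ⊓ z) ⊔ a := by
        have := hm
        rw [hdist y, hdist z, inf_eq_left.mpr hy, inf_eq_left.mpr hz] at this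
        exact this
      have hmxy : x ⊓ y = x ⊓ z := by
        apply hcancel_a
        · rw [sup_comm a (x ⊓ y), sup_comm a (x ⊓ z), hmy]
        · have e1 : a ⊓ (x ⊓ y) = ⊥ :=
            le_antisymm ((inf_le_inf_left a inf_le_left).trans hax0.le) bot_le
          have e2 : a ⊓ (x ⊓ z) = ⊥ :=
            le_antisymm ((inf_le_inf_left a inf_le_left).trans hax0.le) bot_le
          rw [e1, e2]
      have hsxy : x ⊔ y = x ⊔ z := by
        have : x ⊔ (a ⊔ y) = x ⊔ (a ⊔ z) := by
          rw [← sup_assoc, ← sup_assoc]; exact hs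
        rwa [sup_eq_right.mpr hy, sup_eq_right.mpr hz] at this
      exact h y z hsxy hmxy
    · -- a ≤ y, ¬ a ≤ z : contradiction
      exfalso
      have h1 : a ≤ (x ⊔ a) ⊓ y := le_inf le_sup_right hy
      rw [hm] at h1
      exact hz (h1.trans inf_le_right)
    · -- ¬ a ≤ y, a ≤ z : contradiction
      exfalso
      have h1 : a ≤ (x ⊔ a) ⊓ z := le_inf le_sup_right hz
      rw [← hm] at h1
      exact hy (h1.trans inf_le_right)
    · -- neither
      have hy0 := hbot y hy
      have hz0 := hbot z hz
      have hmxy : x ⊓ y = x ⊓ z := by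
        have := hm
        rw [hdist y, hdist z, hy0, hz0, sup_bot_eq, sup_bot_eq] at this
        exact this
      have hsxy : x ⊔ y = x ⊔ z := by
        apply hcancel_a
        · rw [sup_left_comm a x y, sup_left_comm a x z, ← sup_assoc, ← sup_assoc]
          exact hs
        · have e1 : a ⊓ (x ⊔ y) = ⊥ := by
            apply hbot
            intro hle
            rcases hprime x y hle with h' | h'
            · exact hax h'
            · exact hy h'
          have e2 : a ⊓ (x ⊔ z) = ⊥ := by
            apply hbot
            intro hle
            rcases hprime x z hle with h' | h'
            · exact hax h'
            · exact hz h'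
          rw [e1, e2]
      exact h y z hsxy hmxy
  · -- `x ⊔ a` cancellable → `x` cancellable
    intro h y z hs hm
    have hya : a ⊓ y = a ⊓ z := by
      by_cases hy : a ≤ y
      · have : a ≤ x ⊔ z := by rw [← hs]; exact hy.trans le_sup_right
        rcases hprime x z this with h' | h'
        · exact absurd h' hax
        · rw [inf_eq_left.mpr hy, inf_eq_left.mpr h']
      · have hz : ¬ a ≤ z := by
          intro hz
          have : a ≤ x ⊔ y := by rw [hs]; exact hz.trans le_sup_right
          rcases hprime x y this with h' | h'
          · exact hax h'
          · exact hy h'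
        rw [hbot y hy, hbot z hz]
    refine h y z ?_ ?_
    · rw [sup_assoc, sup_comm a y, ← sup_assoc, hs, sup_assoc, sup_comm z a, ← sup_assoc]
    · rw [hdist y, hdist z, hm, hya]
end

section
/- Let L be a lattice with least element 0, let a be an element of L that is both an atom of L and a neutral element of L, and let x ∈ L. If for all y, z ∈ L the equalities x ⊔ (y ⊔ a) = x ⊔ (z ⊔ a) and x ⊓ (y ⊔ a) = x ⊓ (z ⊔ a) imply y ⊔ a = z ⊔ a, then x is a cancellable element of L. -/
/-- Let `L` be a lattice with least element `0`, let `a` be an element of `L` that is both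
an atom and a neutral element of `L`, and let `x ∈ L`. If for all `y, z ∈ L` the equalities
`x ⊔ (y ⊔ a) = x ⊔ (z ⊔ a)` and `x ⊓ (y ⊔ a) = x ⊓ (z ⊔ a)` imply `y ⊔ a = z ⊔ a`, then
`x` is a cancellable element of `L`. -/
theorem stmt_1 {L : Type*} [Lattice L] [OrderBot L] (a : L)
    (ha_atom : IsAtom a)
    (ha_neutral : ∀ y z : L, (a ⊔ y) ⊓ (y ⊔ z) ⊓ (z ⊔ a) = (a ⊓ y) ⊔ (y ⊓ z) ⊔ (z ⊓ a))
    (x : L)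
    (h : ∀ y z : L, x ⊔ (y ⊔ a) = x ⊔ (z ⊔ a) → x ⊓ (y ⊔ a) = x ⊓ (z ⊔ a) → y ⊔ a = z ⊔ a) :
    ∀ y z : L, x ⊔ y = x ⊔ z → x ⊓ y = x ⊓ z → y = z := by
  intro y z hsup hinf
  -- atom dichotomy
  have atomcase : ∀ w : L, a ⊓ w = ⊥ ∨ a ≤ w := by
    intro w
    rcases lt_or_eq_of_le (inf_le_left : a ⊓ w ≤ a) with hlt | heq
    · exact Or.inl (ha_atom.2 _ hlt)
    · exact Or.inr (heq ▸ (inf_le_right : a ⊓ w ≤ w))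
  -- standardness: u ⊓ (v ⊔ a) = (u ⊓ v) ⊔ (u ⊓ a)
  have hstd : ∀ u v : L, u ⊓ (v ⊔ a) = (u ⊓ v) ⊔ (u ⊓ a) := by
    intro u v
    rcases atomcase v with hv | hv
    · set b := u ⊓ (v ⊔ a) with hb
      have hmed := ha_neutral b v
      have hva : v ⊓ a = ⊥ := by rw [inf_comm]; exact hv
      have hble : b ≤ (a ⊓ b) ⊔ (b ⊓ v) ⊔ (v ⊓ a) := by
        rw [← hmed]
        exact le_inf (le_inf le_sup_right le_sup_left) inf_le_right
      rw [hva, sup_bot_eq] at hble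
      apply le_antisymm
      · refine hble.trans (sup_le ?_ ?_)
        · exact le_sup_of_le_right
            (le_inf (inf_le_right.trans inf_le_left) inf_le_left)
        · exact le_sup_of_le_left
            (le_inf (inf_le_left.trans inf_le_left) inf_le_right)
      · exact sup_le (inf_le_inf_left u le_sup_left)
          (inf_le_inf_left u le_sup_right)
    · have h1 : v ⊔ a = v := sup_eq_left.mpr hv
      have h2 : u ⊓ a ≤ u ⊓ v := inf_le_inf_left u hv
      rw [h1, sup_eq_left.mpr h2]
  -- apply h
  have h1 : x ⊔ (y ⊔ a) = x ⊔ (z ⊔ a) := by rw [← sup_assoc, ← sup_assoc, hsup]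
  have h2 : x ⊓ (y ⊔ a) = x ⊓ (z ⊔ a) := by rw [hstd, hstd, hinf]
  have hya : y ⊔ a = z ⊔ a := h y z h1 h2
  -- neutral elements are cancellable
  have hcanc : ∀ p q : L, a ⊔ p = a ⊔ q → a ⊓ p = a ⊓ q → p = q := by
    intro p q hs hi
    have key : ∀ p q : L, a ⊔ p = a ⊔ q → a ⊓ p = a ⊓ q → p ≤ q := by
      intro p q hs hi
      have hmed := ha_neutral p q
      have hrhs : (a ⊓ p) ⊔ (p ⊓ q) ⊔ (q ⊓ a) = p ⊓ q := by
        have h3 : a ⊓ p ≤ p ⊓ q := le_inf inf_le_right (hi ▸ inf_le_right)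
        have h4 : q ⊓ a ≤ p ⊓ q := by
          rw [inf_comm, hi.symm]; exact le_inf inf_le_right (hi ▸ inf_le_right)
        exact le_antisymm (sup_le (sup_le h3 le_rfl) h4)
          (le_sup_of_le_left le_sup_right)
      have hple : p ≤ (a ⊔ p) ⊓ (p ⊔ q) ⊓ (q ⊔ a) :=
        le_inf (le_inf le_sup_right le_sup_left)
          (by rw [sup_comm, ← hs]; exact le_sup_right)
      calc p ≤ (a ⊔ p) ⊓ (p ⊔ q) ⊓ (q ⊔ a) := hple
        _ = p ⊓ q := by rw [hmed, hrhs]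
        _ ≤ q := inf_le_right
    exact le_antisymm (key p q hs hi) (key q p hs.symm hi.symm)
  -- contradiction lemma
  have hcontra : ∀ u v : L, a ⊓ u = ⊥ → a ⊓ v = ⊥ → a ≤ u ⊔ v → False := by
    intro u v hu hv hle
    have hmed := ha_neutral u v
    have hua : u ⊓ a = ⊥ := by rw [inf_comm]; exact hu
    have hva : v ⊓ a = ⊥ := by rw [inf_comm]; exact hv
    have : a ≤ (a ⊓ u) ⊔ (u ⊓ v) ⊔ (v ⊓ a) := by
      rw [← hmed]
      exact le_inf (le_inf le_sup_left hle) le_sup_right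
    rw [hu, hva, bot_sup_eq, sup_bot_eq] at this
    have : a ⊓ u = a := inf_eq_left.mpr (this.trans inf_le_left)
    exact ha_atom.1 (by rw [← this, hu])
  -- case analysis
  rcases atomcase y with hy | hy <;> rcases atomcase z with hz | hz
  · -- both disjoint from a: cancel a
    exact hcanc y z (by rw [sup_comm a y, sup_comm a z, hya]) (by rw [hy, hz])
  · -- a ⊓ y = ⊥, a ≤ z : mixed, contradiction
    exfalso
    have hz' : z ⊔ a = z := sup_eq_left.mpr hz
    have hzy : z = y ⊔ a := by rw [← hz', hya]
    have hxz : x ⊓ z = (x ⊓ y) ⊔ (x ⊓ a) := by rw [hzy, hstd]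
    have hxa : x ⊓ a ≤ y := by
      have : x ⊓ a ≤ x ⊓ z := hxz ▸ le_sup_right
      rw [← hinf] at this
      exact this.trans inf_le_right
    rcases atomcase x with hx | hx
    · exact hcontra x y hx hy (by rw [hsup]; exact hz.trans le_sup_right)
    · have : a ≤ y := by
        have := hxa
        rwa [inf_eq_right.mpr hx] at this
      exact ha_atom.1 (by rw [← hy, inf_eq_left.mpr this])
  · -- a ≤ y, a ⊓ z = ⊥ : mixed, contradiction (symmetric)
    exfalso
    have hy' : y ⊔ a = y := sup_eq_left.mpr hy
    have hyz : y = z ⊔ a := by rw [← hy', hya]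
    have hxy : x ⊓ y = (x ⊓ z) ⊔ (x ⊓ a) := by rw [hyz, hstd]
    have hxa : x ⊓ a ≤ z := by
      have : x ⊓ a ≤ x ⊓ y := hxy ▸ le_sup_right
      rw [hinf] at this
      exact this.trans inf_le_right
    rcases atomcase x with hx | hx
    · exact hcontra x z hx hz (by rw [← hsup]; exact hy.trans le_sup_right)
    · have : a ≤ z := by rwa [inf_eq_right.mpr hx] at hxa
      exact ha_atom.1 (by rw [← hz, inf_eq_left.mpr this])
  · -- a ≤ y and a ≤ z
    rw [← sup_eq_left.mpr hy, ← sup_eq_left.mpr hz, hya]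
end

section
/- Let L be a lattice, let x be a modular element of L, and let y and z be distinct elements of L such that x ⊔ y = x ⊔ z and x ⊓ y = x ⊓ z. Then there exists an element x' ∈ L such that x' ≤ x, x' ⊔ y = x' ⊔ z, x' ⊓ y = x' ⊓ z, and y ⊔ z = x' ⊔ y. (One may take x' = x ⊓ (y ⊔ z).) -/
/-- Let `L` be a lattice, let `x` be a modular element of `L`, and let `y` and `z` be
distinct elements of `L` such that `x ⊔ y = x ⊔ z` and `x ⊓ y = x ⊓ z`. Then there exists
an element `x' ∈ L` such that `x' ≤ x`, `x' ⊔ y = x' ⊔ z`, `x' ⊓ y = x' ⊓ z`, and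
`y ⊔ z = x' ⊔ y`. -/
theorem stmt_2 {L : Type*} [Lattice L] (x : L)
    (hx_mod : ∀ y z : L, y ≤ z → (x ⊔ y) ⊓ z = (x ⊓ z) ⊔ y)
    (y z : L) (hyz : y ≠ z) (hjoin : x ⊔ y = x ⊔ z) (hmeet : x ⊓ y = x ⊓ z) :
    ∃ x' : L, x' ≤ x ∧ x' ⊔ y = x' ⊔ z ∧ x' ⊓ y = x' ⊓ z ∧ y ⊔ z = x' ⊔ y := by
  refine ⟨x ⊓ (y ⊔ z), inf_le_left, ?_, ?_, ?_⟩
  · have h1 : (x ⊓ (y ⊔ z)) ⊔ y = (x ⊔ y) ⊓ (y ⊔ z) := (hx_mod y (y ⊔ z) le_sup_left).symm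
    have h2 : (x ⊓ (y ⊔ z)) ⊔ z = (x ⊔ z) ⊓ (y ⊔ z) := (hx_mod z (y ⊔ z) le_sup_right).symm
    rw [h1, h2, hjoin]
  · rw [inf_right_comm x (y ⊔ z) y, inf_right_comm x (y ⊔ z) z, hmeet]
  · have h1 : (x ⊓ (y ⊔ z)) ⊔ y = (x ⊔ y) ⊓ (y ⊔ z) := (hx_mod y (y ⊔ z) le_sup_left).symm
    have hle : y ⊔ z ≤ x ⊔ y := sup_le le_sup_right (hjoin ▸ le_sup_right)
    rw [h1, inf_of_le_right hle]
end
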